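/- arXiv:2106.06408 — 6 statements merged into one kernel-verified Lean document; each statement's English description precedes it below -/
import Mathlib

section
/- For integers n ≥ 1 and 0 ≤ m ≤ n, the ratio of Vandermonde determinants Δ_n(1,2,...,m̂+1,...,n+1) / Δ_n(1,2,...,n) equals the binomial coefficient n!/(m!(n-m)!), where the numerator is the Vandermonde determinant of the sequence (1,2,...,n+1) with the entry m+1 omitted. -/
/-!
Both determinants are obtained from `Δ_{n+1}(1, …, n+1)` by deleting one entry. Deleting the
entry `m+1` removes exactly the factors `|k - (m+1)|`, `k ≠ m+1`, whose product is `m! (n-m)!`;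
deleting `n+1` removes factors whose product is `n!`. The first identity is proved by induction
on `n`, splitting off the first entry.
-/

open Finset

/-- Vandermonde determinant `Δ_n(z) = ∏_{i<j} (z_j - z_i)`. -/
noncomputable def vanDet {n : ℕ} (z : Fin n → ℝ) : ℝ :=
  ∏ i : Fin n, ∏ j ∈ Finset.Ioi i, (z j - z i)

/-- The tuple `(1, 2, ..., n+1)` with the entry `m+1` removed. -/
def eTuple (n m : ℕ) : Fin n → ℝ := fun i => if (i : ℕ) < m then (i : ℝ) + 1 else (i : ℝ) + 2

open Nat

lemma vanDet_succ {n : ℕ} (z : Fin (n + 1) → ℝ) :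
    vanDet z = (∏ j : Fin n, (z j.succ - z 0)) * vanDet (fun i => z i.succ) := by
  simp only [vanDet, Fin.prod_univ_succ, Fin.prod_Ioi_zero, Fin.prod_Ioi_succ]

lemma vanDet_add_const {n : ℕ} (z : Fin n → ℝ) (a : ℝ) :
    vanDet (fun i => z i + a) = vanDet z := by
  simp only [vanDet, add_sub_add_right_eq_sub]

lemma vanDet_ne_zero {n : ℕ} {z : Fin n → ℝ} (hz : Function.Injective z) :
    vanDet z ≠ 0 := by
  rw [vanDet, ← Matrix.det_vandermonde]
  exact Matrix.det_vandermonde_ne_zero_iff.mpr hz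

lemma Fin.prod_natCast_add_one (n : ℕ) : ∏ i : Fin n, ((i : ℝ) + 1) = n ! := by
  have h := Fin.prod_univ_eq_prod_range (fun i => i + 1) n
  rw [prod_range_add_one_eq_factorial] at h
  exact_mod_cast h

lemma vanDet_natCast_add_one_succ (n : ℕ) :
    vanDet (fun i : Fin (n + 1) => (i : ℝ) + 1)
      = n ! * vanDet (fun i : Fin n => (i : ℝ) + 1) := by
  rw [vanDet_succ]
  simp only [Fin.val_succ, Fin.val_zero, cast_add, cast_one, cast_zero, add_sub_cancel_right,
    zero_add]
  rw [Fin.prod_natCast_add_one, vanDet_add_const (fun i : Fin n => (i : ℝ) + 1) 1]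

lemma vanDet_succAbove_zero (n : ℕ) :
    vanDet (fun i : Fin n => ((0 : Fin (n + 1)).succAbove i : ℝ) + 1) * n !
      = vanDet (fun i : Fin (n + 1) => (i : ℝ) + 1) := by
  rw [vanDet_natCast_add_one_succ, mul_comm]
  simp only [Fin.succAbove_zero, Fin.val_succ, cast_add, cast_one]
  rw [vanDet_add_const]

lemma prod_succAbove_natCast_add_one {n : ℕ} (p : Fin (n + 1)) :
    (∏ j : Fin n, ((p.succAbove j : ℝ) + 1)) * ((p : ℝ) + 1) = (n + 1)! := by
  rw [mul_comm, ← Fin.prod_univ_succAbove (fun k : Fin (n + 1) => (k : ℝ) + 1) p,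
    Fin.prod_natCast_add_one]

lemma vanDet_succAbove_mul_factorial (n : ℕ) (p : Fin (n + 1)) :
    vanDet (fun i : Fin n => (p.succAbove i : ℝ) + 1) * (p ! * (n - p)!)
      = vanDet (fun i : Fin (n + 1) => (i : ℝ) + 1) := by
  induction n with
  | zero => simp [Fin.fin_one_eq_zero p, vanDet]
  | succ n ih =>
    cases p using Fin.cases with
    | zero => simpa using vanDet_succAbove_zero (n + 1)
    | succ q =>
      rw [vanDet_natCast_add_one_succ (n + 1), ← ih q, vanDet_succ]
      simp only [Fin.succ_succAbove_zero, Fin.succ_succAbove_succ, Fin.val_succ, Fin.val_zero,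
        cast_add, cast_one, cast_zero, add_sub_cancel_right, zero_add]
      rw [vanDet_add_const (fun i => (q.succAbove i : ℝ) + 1) 1, Nat.succ_sub_succ,
        ← prod_succAbove_natCast_add_one q, factorial_succ]
      push_cast
      ring

lemma eTuple_eq_succAbove {n m : ℕ} (hm : m ≤ n) :
    eTuple n m = fun i => ((Fin.succAbove ⟨m, Nat.lt_succ_of_le hm⟩ i : ℕ) : ℝ) + 1 := by
  ext i
  simp only [eTuple, Fin.succAbove, Fin.lt_def, Fin.val_castSucc]
  split_ifs
  · rfl
  · push_cast [Fin.val_succ]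
    ring

theorem vandermonde_ratio_general (n m : ℕ) (hm : m ≤ n) :
    vanDet (eTuple n m) / vanDet (fun i : Fin n => (i : ℝ) + 1)
      = (n.factorial : ℝ) / (m.factorial * (n - m).factorial) := by
  have hB : vanDet (fun i : Fin n => (i : ℝ) + 1) ≠ 0 :=
    vanDet_ne_zero fun i j h => Fin.ext (by exact_mod_cast add_right_cancel h)
  rw [div_eq_div_iff hB (by positivity), eTuple_eq_succAbove hm]
  exact (vanDet_succAbove_mul_factorial n ⟨m, Nat.lt_succ_of_le hm⟩).trans
    (vanDet_natCast_add_one_succ n)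

theorem vandermonde_ratio (n m : ℕ) (hn : 1 ≤ n) (hm : m ≤ n) :
    vanDet (eTuple n m) / vanDet (fun i : Fin n => (i : ℝ) + 1)
      = (n.factorial : ℝ) / (m.factorial * (n - m).factorial) :=
  vandermonde_ratio_general n m hm
end

section
/- For positive reals z_0, ..., z_{n-1}, the determinant of the n×n matrix whose (i,j) entry is Γ(z_j + i) (with i, j running from 0 to n-1) equals (∏_{j=0}^{n-1} Γ(z_j)) · Δ_n(z), where Δ_n(z) = ∏_{0 ≤ i < j ≤ n-1}(z_j - z_i). -/
open Finset

/-
Γ(z + i) = Γ(z) · z(z+1)⋯(z+i-1), so the matrix is the matrix (pᵢ(z_j)) of the monic rising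
factorials pᵢ = ascPochhammer i, with column j scaled by Γ(z_j). Row operations reduce a matrix of
monic polynomials of degrees 0, …, n-1 evaluated at the z_j to the Vandermonde matrix.
-/

theorem Real.Gamma_add_nat_eq_mul_ascPochhammer {z : ℝ} (hz : ∀ k : ℕ, z ≠ -k) (n : ℕ) :
    Real.Gamma (z + n) = Real.Gamma z * (ascPochhammer ℝ n).eval z := by
  induction n with
  | zero => simp
  | succ n ih =>
    have hzn : z + n ≠ 0 := fun h => hz n (by linarith)
    rw [Nat.cast_succ, ← add_assoc, Real.Gamma_add_one hzn, ih, ascPochhammer_succ_right]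
    simp only [Polynomial.eval_mul, Polynomial.eval_add, Polynomial.eval_X,
      Polynomial.eval_natCast]
    ring

theorem Matrix.det_of_eval_monic_eq_prod_sub {R : Type*} [CommRing R] {n : ℕ}
    (p : Fin n → Polynomial R) (h_deg : ∀ i, (p i).natDegree = i) (h_monic : ∀ i, (p i).Monic)
    (v : Fin n → R) :
    (Matrix.of fun i j => (p i).eval (v j)).det = ∏ i : Fin n, ∏ j ∈ Ioi i, (v j - v i) := by
  rw [← Matrix.det_vandermonde, Matrix.det_eval_matrixOfPolynomials_eq_det_vandermonde v p h_deg
    h_monic, ← Matrix.det_transpose]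
  rfl

theorem det_gamma (n : ℕ) (z : Fin n → ℝ) (hz : ∀ j, 0 < z j) :
    Matrix.det (Matrix.of fun i j : Fin n => Real.Gamma (z j + (i : ℕ)))
      = (∏ j : Fin n, Real.Gamma (z j)) * vanDet z := by
  have hz_ne_neg_nat : ∀ j (k : ℕ), z j ≠ -k := fun j k h => by
    linarith [hz j, k.cast_nonneg (α := ℝ)]
  simp_rw [Real.Gamma_add_nat_eq_mul_ascPochhammer (hz_ne_neg_nat _)]
  exact (Matrix.det_mul_row _
    (Matrix.of fun i j : Fin n => (ascPochhammer ℝ i).eval (z j))).trans <| congrArg _ <|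
      Matrix.det_of_eval_monic_eq_prod_sub (fun i => ascPochhammer ℝ i)
        (fun i => ascPochhammer_natDegree ℝ i) (fun i => monic_ascPochhammer ℝ i) z
end

section
/- For real numbers z_0, ..., z_{n-1} and w such that all quantities are defined and nonzero, det[(z_j)_i / (z_j + w)_i]_{i,j=0}^{n-1} = (∏_{j=0}^{n-1} (w)_j / (z_j + w)_{n-1}) · Δ_n(z), where (a)_k denotes the Pochhammer symbol (rising factorial). -/
open Finset

/-- Rising factorial (Pochhammer symbol) `(a)_k = a(a+1)⋯(a+k-1)`. -/
noncomputable def poch (a : ℝ) (k : ℕ) : ℝ := (ascPochhammer ℝ k).eval a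

/-!
Multiplying column `j` by `(z_j + w)_{n-1}` turns the entries into `P_i(z_j)`, where
`P_i(x) = (x)_i (x + w + i)_{n-1-i}` is a polynomial of degree `n - 1`. Hence the scaled matrix
is the coefficient matrix of the `P_i` times the transposed Vandermonde matrix of `z`, and its
determinant is `det C · Δ_n(z)` with `C` independent of `z`. At the nodes `z_j = -j` the factor
`(z_j)_i` vanishes for `i > j`, so the scaled matrix is triangular; comparing its diagonal with
that of the (equally triangular) matrix `[(z_j)_i]`, whose determinant is `Δ_n(z)`, gives
`det C = ∏_j (w)_j`.
-/

open Polynomial Matrix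

theorem Matrix.det_of_eval_eq_det_coeff_mul_det_vandermonde {R : Type*} [CommRing R] {n : ℕ}
    (p : Fin n → R[X]) (hp : ∀ i, (p i).natDegree < n) (v : Fin n → R) :
    det (of fun i j => (p i).eval (v j))
      = det (of fun i (k : Fin n) => (p i).coeff k) * det (vandermonde v) := by
  have hfactor : (of fun i j => (p i).eval (v j))
      = of (fun i (k : Fin n) => (p i).coeff k) * (vandermonde v)ᵀ := by
    ext i j
    rw [of_apply, eval_eq_sum_range' (hp i), ← Fin.sum_univ_eq_sum_range, mul_apply]
    rfl
  rw [hfactor, det_mul, det_transpose]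

lemma poch_add (a : ℝ) (i k : ℕ) : poch a (i + k) = poch a i * poch (a + i) k := by
  simpa [poch, eval_comp] using congrArg (eval a) (ascPochhammer_mul ℝ i k).symm

lemma poch_ne_zero {a : ℝ} {m : ℕ} (h : ∀ k < m, a + k ≠ 0) : poch a m ≠ 0 := by
  simp only [poch, ne_eq, ascPochhammer_eval_eq_zero_iff, not_exists, not_and]
  intro k hk hka
  exact h k hk (by rw [hka]; ring)

lemma poch_neg_natCast_of_lt {i j : ℕ} (h : j < i) : poch (-(j : ℝ)) i = 0 :=
  ascPochhammer_eval_neg_coe_nat_of_lt h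

noncomputable def pochPoly (n : ℕ) (w : ℝ) (i : ℕ) : ℝ[X] :=
  ascPochhammer ℝ i * (ascPochhammer ℝ (n - 1 - i)).comp (X + C (w + i))

lemma pochPoly_eval (n : ℕ) (w : ℝ) (i : ℕ) (x : ℝ) :
    (pochPoly n w i).eval x = poch x i * poch (x + w + i) (n - 1 - i) := by
  simp [pochPoly, poch, eval_comp, add_assoc]

lemma natDegree_pochPoly_lt {n i : ℕ} (w : ℝ) (hi : i < n) : (pochPoly n w i).natDegree < n := by
  have hle : (pochPoly n w i).natDegree ≤ i + (n - 1 - i) :=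
    natDegree_mul_le_of_le (ascPochhammer_natDegree ℝ i).le
      (by rw [natDegree_comp, ascPochhammer_natDegree, natDegree_X_add_C, mul_one])
  omega

lemma det_coeff_pochPoly (n : ℕ) (w : ℝ) :
    det (of fun i (k : Fin n) => (pochPoly n w i).coeff k) = ∏ j : Fin n, poch w j := by
  set v : Fin n → ℝ := fun j => -((j : ℕ) : ℝ)
  have hv : det (vandermonde v) ≠ 0 :=
    det_vandermonde_ne_zero_iff.mpr fun a b hab => Fin.ext (by simpa [v] using hab)
  have htriangular : det (of fun i j : Fin n => (pochPoly n w i).eval (v j))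
      = (∏ i : Fin n, poch (v i) i) * ∏ i : Fin n, poch w (n - 1 - i) := by
    rw [det_of_isUpperTriangular, ← prod_mul_distrib]
    · refine prod_congr rfl fun i _ => ?_
      rw [of_apply, pochPoly_eval, show v i + w + i = w by simp only [v]; ring]
    · intro i j hji
      have hzero : poch (v j) i = 0 := poch_neg_natCast_of_lt hji
      rw [of_apply, pochPoly_eval, hzero, zero_mul]
  have hvandermonde : det (vandermonde v) = ∏ i : Fin n, poch (v i) i := by
    rw [det_eval_matrixOfPolynomials_eq_det_vandermonde v (fun i => ascPochhammer ℝ i)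
      (fun i => ascPochhammer_natDegree ℝ i) (fun i => monic_ascPochhammer ℝ i),
      det_of_isLowerTriangular]
    · rfl
    · intro i j hij
      exact poch_neg_natCast_of_lt hij
  rw [det_of_eval_eq_det_coeff_mul_det_vandermonde _ (fun i => natDegree_pochPoly_lt w i.isLt),
    ← hvandermonde, mul_comm] at htriangular
  rw [mul_left_cancel₀ hv htriangular, ← Equiv.prod_comp Fin.revPerm]
  refine prod_congr rfl fun i _ => ?_
  rw [Fin.revPerm_apply, Fin.val_rev]
  congr 1
  omega

lemma det_pochPoly_eval (n : ℕ) (w : ℝ) (z : Fin n → ℝ) :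
    det (of fun i j : Fin n => poch (z j) i * poch (z j + w + i) (n - 1 - i))
      = (∏ j : Fin n, poch w j) * vanDet z := by
  simp_rw [← pochPoly_eval]
  rw [det_of_eval_eq_det_coeff_mul_det_vandermonde _ (fun i => natDegree_pochPoly_lt w i.isLt),
    det_coeff_pochPoly, det_vandermonde, vanDet]

theorem det_pochhammer_ratio (n : ℕ) (z : Fin n → ℝ) (w : ℝ)
    (hnz : ∀ (j : Fin n) (k : ℕ), k < n → z j + w + (k : ℝ) ≠ 0) :
    Matrix.det (Matrix.of fun i j : Fin n => poch (z j) (i : ℕ) / poch (z j + w) (i : ℕ))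
      = (∏ j : Fin n, poch w (j : ℕ) / poch (z j + w) (n - 1)) * vanDet z := by
  have hden : ∀ (j : Fin n) (m : ℕ), m ≤ n - 1 → poch (z j + w) m ≠ 0 :=
    fun j m hm => poch_ne_zero fun k hk => hnz j k (by omega)
  have hscaled : (of fun i j : Fin n =>
      poch (z j + w) (n - 1) * (poch (z j) i / poch (z j + w) i))
      = of fun i j : Fin n => poch (z j) i * poch (z j + w + i) (n - 1 - i) := by
    ext i j
    have hi : (i : ℕ) ≤ n - 1 := by omega
    rw [of_apply, of_apply, ← Nat.add_sub_cancel' hi, poch_add, Nat.add_sub_cancel' hi]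
    field_simp [hden j i hi]
  have hdet := det_mul_row (fun j => poch (z j + w) (n - 1))
    (of fun i j : Fin n => poch (z j) i / poch (z j + w) i)
  simp only [of_apply] at hdet
  rw [hscaled, det_pochPoly_eval] at hdet
  have hD : ∏ j : Fin n, poch (z j + w) (n - 1) ≠ 0 :=
    prod_ne_zero_iff.mpr fun j _ => hden j (n - 1) le_rfl
  rw [prod_div_distrib, div_mul_eq_mul_div, eq_div_iff hD, hdet, mul_comm]
end

section
/- For positive reals z_0, ..., z_{n-1} and w > 0, the determinant of the n×n matrix with (i,j) entry B(z_j + i, w) (the Beta function, i,j from 0 to n-1) equals (∏_{j=0}^{n-1} Γ(z_j)Γ(w+j)/Γ(z_j + w + n - 1)) · Δ_n(z). -/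
open Finset

/-- The Beta function `B(x,y) = Γ(x)Γ(y)/Γ(x+y)`. -/
noncomputable def betaFn (x y : ℝ) : ℝ := Real.Gamma x * Real.Gamma y / Real.Gamma (x + y)

/-!
The Beta function satisfies the Pascal recursion `B(x, y) = B(x + 1, y) + B(x, y + 1)`, hence
`B(z + i, w) = ∑ₖ C(n-1-i, k) B(z + i + k, w + n-1-i-k)`. So the matrix is a unipotent upper
triangular matrix of binomial coefficients times the matrix `(B(z_j + r, w + n-1-r))_{r,j}`.
All entries of column `j` of the latter share the denominator `Γ(z_j + w + n - 1)`, and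
`B(z_j + r, w + n-1-r) = Γ(w + n-1-r) Γ(z_j) / Γ(z_j + w + n - 1) · (z_j)_r` with the rising
factorial `(z_j)_r` a monic polynomial of degree `r` in `z_j`: what remains is a Vandermonde
determinant.
-/

open Polynomial

theorem Finset.Nat.eq_sum_antidiagonal_choose_nsmul {M : Type*} [AddCommMonoid M]
    (f : ℕ → ℕ → M) (hf : ∀ i j, f i j = f (i + 1) j + f i (j + 1)) (m : ℕ) :
    f 0 0 = ∑ ij ∈ antidiagonal m, m.choose ij.1 • f ij.1 ij.2 := by
  induction m with
  | zero => simp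
  | succ m ih =>
    rw [sum_antidiagonal_choose_succ_nsmul, ← sum_add_distrib, ih]
    refine sum_congr rfl fun ij hij => ?_
    rw [Nat.choose_symm_of_eq_add (mem_antidiagonal.1 hij).symm, ← nsmul_add, add_comm, ← hf]

theorem Real.Gamma_add_nat_eq_eval_ascPochhammer_mul {x : ℝ} (hx : ∀ m : ℕ, x ≠ -m)
    (k : ℕ) :
    Real.Gamma (x + k) = (ascPochhammer ℝ k).eval x * Real.Gamma x := by
  induction k with
  | zero => simp
  | succ k ih =>
    have hxk : x + k ≠ 0 := fun h => hx k (by linarith)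
    rw [Nat.cast_succ, ← add_assoc, Real.Gamma_add_one hxk, ih, ascPochhammer_succ_eval]
    ring

theorem betaFn_eq_add {x y : ℝ} (hx : x ≠ 0) (hy : y ≠ 0) (hxy : x + y ≠ 0) :
    betaFn x y = betaFn (x + 1) y + betaFn x (y + 1) := by
  unfold betaFn
  rw [add_right_comm, ← add_assoc, Real.Gamma_add_one hx, Real.Gamma_add_one hy,
    Real.Gamma_add_one hxy]
  field_simp

theorem betaFn_add_nat_eq_sum_range {x y : ℝ} (hx : 0 < x) (hy : 0 < y) {i N : ℕ}
    (hiN : i ≤ N) :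
    betaFn (x + i) y
      = ∑ r ∈ range (N + 1),
          ((N - i).choose (N - r) : ℝ) * betaFn (x + r) (y + (N - r : ℕ)) := by
  obtain ⟨m, rfl⟩ := Nat.exists_eq_add_of_le hiN
  have pascal := Finset.Nat.eq_sum_antidiagonal_choose_nsmul
    (fun k l => betaFn (x + (i + k : ℕ)) (y + l))
    (fun k l => by
      push_cast
      rw [betaFn_eq_add (by positivity) (by positivity) (by positivity)]
      ring_nf) m
  simp only [Nat.cast_zero, add_zero, nsmul_eq_mul] at pascal
  have hlow : ∀ r ∈ range i, ((i + m - i).choose (i + m - r) : ℝ) = 0 := fun r hr => by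
    rw [Nat.choose_eq_zero_of_lt (by have := mem_range.1 hr; omega), Nat.cast_zero]
  rw [pascal, add_assoc, sum_range_add,
    sum_eq_zero (s := range i) fun r hr => by rw [hlow r hr, zero_mul], zero_add,
    add_tsub_cancel_left, Nat.sum_antidiagonal_eq_sum_range_succ_mk]
  refine sum_congr rfl fun k hk => ?_
  have hkm : k ≤ m := Nat.lt_succ_iff.1 (mem_range.1 hk)
  rw [show i + m - (i + k) = m - k by omega, Nat.choose_symm hkm]

theorem det_eval_eq_vanDet {n : ℕ} (z : Fin n → ℝ) (p : Fin n → ℝ[X])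
    (h_deg : ∀ i, (p i).natDegree = i) (h_monic : ∀ i, (p i).Monic) :
    (Matrix.of fun i j => (p i).eval (z j)).det = vanDet z := by
  rw [vanDet, ← Matrix.det_vandermonde,
    Matrix.det_eval_matrixOfPolynomials_eq_det_vandermonde z p h_deg h_monic,
    ← Matrix.det_transpose]
  rfl

theorem det_choose_tsub_tsub (R : Type*) [CommRing R] (n : ℕ) :
    (Matrix.of fun i r : Fin n => ((n - 1 - i).choose (n - 1 - r) : R)).det = 1 := by
  rw [Matrix.det_of_isUpperTriangular fun i r hri => ?_]
  · simp
  · have : (r : ℕ) < i := hri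
    rw [Matrix.of_apply, Nat.choose_eq_zero_of_lt (by omega), Nat.cast_zero]

theorem det_betaFn_add_eq_det_betaFn_add_tsub {n : ℕ} {z : Fin n → ℝ} {w : ℝ}
    (hz : ∀ j, 0 < z j) (hw : 0 < w) :
    (Matrix.of fun i j : Fin n => betaFn (z j + (i : ℕ)) w).det
      = (Matrix.of fun r j : Fin n => betaFn (z j + (r : ℕ)) (w + (n - 1 - r : ℕ))).det := by
  have hfactor : (Matrix.of fun i j : Fin n => betaFn (z j + (i : ℕ)) w)
      = (Matrix.of fun i r : Fin n => ((n - 1 - i).choose (n - 1 - r) : ℝ))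
        * Matrix.of fun r j : Fin n => betaFn (z j + (r : ℕ)) (w + (n - 1 - r : ℕ)) := by
    ext i j
    rw [Matrix.of_apply, Matrix.mul_apply, betaFn_add_nat_eq_sum_range (hz j) hw
      (Nat.le_sub_one_of_lt i.isLt), Nat.sub_add_cancel i.pos]
    exact (Fin.sum_univ_eq_sum_range (fun r => _) n).symm
  rw [hfactor, Matrix.det_mul, det_choose_tsub_tsub, one_mul]

theorem det_betaFn_add_tsub {n : ℕ} {z : Fin n → ℝ} (hz : ∀ j, 0 < z j) (w : ℝ) :
    (Matrix.of fun r j : Fin n => betaFn (z j + (r : ℕ)) (w + (n - 1 - r : ℕ))).det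
      = (∏ r : Fin n, Real.Gamma (w + (n - 1 - r : ℕ)))
        * ((∏ j, Real.Gamma (z j) / Real.Gamma (z j + w + (n : ℝ) - 1)) * vanDet z) := by
  set P : Matrix (Fin n) (Fin n) ℝ := .of fun r j => (ascPochhammer ℝ r).eval (z j)
  have hfactor : (Matrix.of fun r j : Fin n => betaFn (z j + (r : ℕ)) (w + (n - 1 - r : ℕ)))
      = .of fun r j => Real.Gamma (w + (n - 1 - r : ℕ)) * (Matrix.of fun r j =>
          Real.Gamma (z j) / Real.Gamma (z j + w + (n : ℝ) - 1) * P r j) r j := by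
    ext r j
    have hzj : ∀ m : ℕ, z j ≠ -m := fun m h => by
      linarith [hz j, (Nat.cast_nonneg m : (0 : ℝ) ≤ m)]
    have hsum : z j + (r : ℕ) + (w + (n - 1 - r : ℕ)) = z j + w + (n : ℝ) - 1 := by
      have := r.isLt
      rw [Nat.cast_sub (by omega), Nat.cast_sub (by omega)]
      push_cast
      ring
    simp only [P, Matrix.of_apply]
    rw [betaFn, hsum, Real.Gamma_add_nat_eq_eval_ascPochhammer_mul hzj]
    ring
  rw [hfactor, Matrix.det_mul_column, Matrix.det_mul_row,
    det_eval_eq_vanDet z _ (ascPochhammer_natDegree ℝ ·) (monic_ascPochhammer ℝ ·)]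

theorem det_beta (n : ℕ) (z : Fin n → ℝ) (w : ℝ) (hz : ∀ j, 0 < z j) (hw : 0 < w) :
    Matrix.det (Matrix.of fun i j : Fin n => betaFn (z j + (i : ℕ)) w)
      = (∏ j : Fin n,
          Real.Gamma (z j) * Real.Gamma (w + (j : ℕ)) / Real.Gamma (z j + w + (n : ℝ) - 1))
        * vanDet z := by
  have hreflect : ∏ r : Fin n, Real.Gamma (w + (n - 1 - r : ℕ))
      = ∏ j : Fin n, Real.Gamma (w + (j : ℕ)) := by
    simp only [Fin.prod_univ_eq_prod_range (fun r => Real.Gamma (w + r)),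
      Fin.prod_univ_eq_prod_range (fun r => Real.Gamma (w + (n - 1 - r : ℕ)))]
    exact prod_range_reflect (fun r => Real.Gamma (w + r)) n
  rw [det_betaFn_add_eq_det_betaFn_add_tsub hz hw, det_betaFn_add_tsub hz, hreflect,
    ← mul_assoc, ← prod_mul_distrib]
  exact congrArg (· * vanDet z) (prod_congr rfl fun j _ => by ring)
end

section
/- For α > -1 and m ≠ n, the polynomials l_n^α(x) = Σ_{m'=0}^{n} (-1)^{n+m'} n!(α+1)_n / (m'!(n-m')!(α+1)_{m'}) x^{m'} are orthogonal with respect to the weight x^α e^{-x} on (0,∞): ∫_0^∞ l_n^α(x) l_m^α(x) x^α e^{-x} dx = 0. -/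
/-! Against the weight `x ^ α * exp (-x)` on `(0, ∞)` the monomial `x ^ i` integrates to
`Γ(α + 1 + i) = Γ(α + 1) (α + 1)_j (α + 1 + j)_k` for `i = j + k`. Hence, for `k < n`, the integral
of `lagGS α n x * x ^ k` is, up to the factor `(-1)^n (α + 1)_n Γ(α + 1)`, the alternating sum
`∑ j, (-1)^j (n choose j) q(j)` of the polynomial `q(y) = (α + 1 + y)_k` of degree `k < n`: an
`n`-th forward difference of `q`, which vanishes. So `lagGS α n` is orthogonal to every polynomial
of degree below `n`, in particular to `lagGS α m` for `m < n`. -/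

open Finset

noncomputable def lagGS (α : ℝ) (n : ℕ) (x : ℝ) : ℝ :=
  ∑ m ∈ Finset.range (n + 1),
    (-1 : ℝ) ^ (n + m) * (n.factorial : ℝ) * poch (α + 1) n
      / ((m.factorial : ℝ) * ((n - m).factorial : ℝ) * poch (α + 1) m) * x ^ m

open Polynomial MeasureTheory

theorem Polynomial.sum_range_neg_one_pow_mul_choose_mul_eval_eq_zero {R : Type*} [CommRing R]
    (P : R[X]) {n : ℕ} (hP : P.natDegree < n) :
    ∑ k ∈ range (n + 1), (-1 : R) ^ k * n.choose k * P.eval (k : R) = 0 := by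
  have h := congr_fun (P.fwdDiff_iter_eq_zero_of_degree_lt hP) 0
  rw [fwdDiff_iter_eq_sum_shift, Pi.zero_apply] at h
  calc ∑ k ∈ range (n + 1), (-1 : R) ^ k * n.choose k * P.eval (k : R)
      = (-1) ^ n * ∑ k ∈ range (n + 1),
          ((-1 : ℤ) ^ (n - k) * n.choose k) • P.eval (0 + k • (1 : R)) := by
        rw [mul_sum]
        refine sum_congr rfl fun k hk => ?_
        obtain ⟨j, rfl⟩ := Nat.exists_eq_add_of_le (Nat.lt_succ_iff.mp (mem_range.mp hk))
        simp only [Nat.add_sub_cancel_left, zsmul_eq_mul, nsmul_one, zero_add]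
        push_cast
        have hsign : (-1 : R) ^ (k + j) * (-1) ^ j = (-1) ^ k := by
          rw [pow_add, mul_assoc, ← pow_add, ← two_mul, pow_mul]
          simp
        rw [← hsign]
        ring
    _ = 0 := by rw [h, mul_zero]

theorem Real.Gamma_add_nat_eq_mul_poch {a : ℝ} (ha : ∀ k : ℕ, a ≠ -k) (n : ℕ) :
    Real.Gamma (a + n) = Real.Gamma a * poch a n := by
  induction n with
  | zero => simp [poch]
  | succ n ih =>
    have hn : a + n ≠ 0 := fun h => ha n (eq_neg_of_add_eq_zero_left h)
    rw [Nat.cast_succ, ← add_assoc, Real.Gamma_add_one hn, ih]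
    simp only [poch, ascPochhammer_succ_eval]
    ring

section GammaMoments

variable {α : ℝ}

theorem pow_mul_rpow_mul_exp_neg_eq {x : ℝ} (hx : 0 < x) (j : ℕ) :
    x ^ j * x ^ α * Real.exp (-x) = Real.exp (-x) * x ^ (α + 1 + j - 1) := by
  rw [show α + 1 + j - 1 = α + j by ring, Real.rpow_add hx, Real.rpow_natCast]
  ring

theorem add_one_add_natCast_pos (hα : -1 < α) (j : ℕ) : 0 < α + 1 + j := by
  have := j.cast_nonneg (α := ℝ)
  linarith

theorem integrableOn_pow_mul_rpow_mul_exp_neg (hα : -1 < α) (j : ℕ) :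
    IntegrableOn (fun x : ℝ => x ^ j * x ^ α * Real.exp (-x)) (Set.Ioi 0) :=
  (Real.GammaIntegral_convergent (add_one_add_natCast_pos hα j)).congr_fun
    (fun _ hx => (pow_mul_rpow_mul_exp_neg_eq hx j).symm) measurableSet_Ioi

theorem integral_pow_mul_rpow_mul_exp_neg (hα : -1 < α) (j : ℕ) :
    ∫ x in Set.Ioi (0 : ℝ), x ^ j * x ^ α * Real.exp (-x) = Real.Gamma (α + 1 + j) := by
  rw [Real.Gamma_eq_integral (add_one_add_natCast_pos hα j)]
  exact setIntegral_congr_fun measurableSet_Ioi fun _ hx => pow_mul_rpow_mul_exp_neg_eq hx j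

theorem integral_sum_mul_pow_mul_rpow_mul_exp_neg (hα : -1 < α) {ι : Type*} (s : Finset ι)
    (c : ι → ℝ) (e : ι → ℕ) :
    ∫ x in Set.Ioi (0 : ℝ), (∑ i ∈ s, c i * x ^ e i) * x ^ α * Real.exp (-x)
      = ∑ i ∈ s, c i * Real.Gamma (α + 1 + e i) := by
  have hsplit : (fun x : ℝ => (∑ i ∈ s, c i * x ^ e i) * x ^ α * Real.exp (-x))
      = fun x => ∑ i ∈ s, c i * (x ^ e i * x ^ α * Real.exp (-x)) := by
    funext x
    simp only [sum_mul, mul_assoc]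
  rw [hsplit, integral_finsetSum _ fun i _ =>
    (integrableOn_pow_mul_rpow_mul_exp_neg hα (e i)).const_mul (c i)]
  simp only [integral_const_mul, integral_pow_mul_rpow_mul_exp_neg hα]

end GammaMoments

section Laguerre

noncomputable def lagCoeff (α : ℝ) (n m : ℕ) : ℝ :=
  (-1 : ℝ) ^ (n + m) * (n.factorial : ℝ) * poch (α + 1) n
    / ((m.factorial : ℝ) * ((n - m).factorial : ℝ) * poch (α + 1) m)

theorem lagGS_eq_sum (α : ℝ) (n : ℕ) (x : ℝ) :
    lagGS α n x = ∑ m ∈ range (n + 1), lagCoeff α n m * x ^ m :=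
  rfl

theorem lagGS_mul_lagGS_eq_sum (α : ℝ) (n m : ℕ) (x : ℝ) :
    lagGS α n x * lagGS α m x = ∑ p ∈ range (n + 1) ×ˢ range (m + 1),
      lagCoeff α n p.1 * lagCoeff α m p.2 * x ^ (p.1 + p.2) := by
  rw [lagGS_eq_sum, lagGS_eq_sum, sum_mul_sum, sum_product]
  exact sum_congr rfl fun _ _ => sum_congr rfl fun _ _ => by ring

variable {α : ℝ}

theorem lagCoeff_mul_Gamma (hα : -1 < α) {n j : ℕ} (hj : j ≤ n) (k : ℕ) :
    lagCoeff α n j * Real.Gamma (α + 1 + ↑(j + k))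
      = (-1) ^ n * poch (α + 1) n * Real.Gamma (α + 1) *
        ((-1) ^ j * n.choose j * ((ascPochhammer ℝ k).comp (X + C (α + 1))).eval (j : ℝ)) := by
  have hpos : ∀ i : ℕ, 0 < α + 1 + i := add_one_add_natCast_pos hα
  have hGamma : Real.Gamma (α + 1 + ↑(j + k))
      = Real.Gamma (α + 1) * poch (α + 1) j * poch (α + 1 + j) k := by
    rw [Nat.cast_add, ← add_assoc,
      Real.Gamma_add_nat_eq_mul_poch (fun i h => by linarith [hpos i, j.cast_nonneg (α := ℝ)]),
      Real.Gamma_add_nat_eq_mul_poch (fun i h => by linarith [hpos i])]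
  have hpoch : poch (α + 1) j ≠ 0 := (ascPochhammer_pos j _ (by linarith)).ne'
  rw [hGamma, lagCoeff, Nat.cast_choose ℝ hj, eval_comp]
  simp only [eval_add, eval_X, eval_C, poch] at hpoch ⊢
  rw [pow_add, add_comm (j : ℝ)]
  field_simp

theorem sum_lagCoeff_mul_Gamma_eq_zero (hα : -1 < α) {n k : ℕ} (hk : k < n) :
    ∑ j ∈ range (n + 1), lagCoeff α n j * Real.Gamma (α + 1 + ↑(j + k)) = 0 := by
  have hdeg : ((ascPochhammer ℝ k).comp (X + C (α + 1))).natDegree < n := by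
    rwa [natDegree_comp, ascPochhammer_natDegree, natDegree_X_add_C, mul_one]
  rw [sum_congr rfl fun j hj => lagCoeff_mul_Gamma hα (Nat.lt_succ_iff.mp (mem_range.mp hj)) k,
    ← mul_sum, sum_range_neg_one_pow_mul_choose_mul_eval_eq_zero _ hdeg, mul_zero]

theorem integral_lagGS_mul_lagGS_of_lt (hα : -1 < α) {n m : ℕ} (h : m < n) :
    ∫ x in Set.Ioi (0 : ℝ), lagGS α n x * lagGS α m x * x ^ α * Real.exp (-x) = 0 := by
  simp only [lagGS_mul_lagGS_eq_sum]
  rw [integral_sum_mul_pow_mul_rpow_mul_exp_neg hα, sum_product_right]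
  refine sum_eq_zero fun k hk => ?_
  have hkn : k < n := (Nat.lt_succ_iff.mp (mem_range.mp hk)).trans_lt h
  simp only [mul_right_comm _ (lagCoeff α m k)]
  rw [← sum_mul, sum_lagCoeff_mul_Gamma_eq_zero hα hkn, zero_mul]

end Laguerre

theorem lagGS_orthogonal (α : ℝ) (hα : -1 < α) (n m : ℕ) (hnm : m ≠ n) :
    ∫ x in Set.Ioi (0 : ℝ), lagGS α n x * lagGS α m x * x ^ α * Real.exp (-x) = 0 := by
  rcases hnm.lt_or_gt with h | h
  · exact integral_lagGS_mul_lagGS_of_lt hα h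
  · simpa only [mul_comm (lagGS α m _)] using integral_lagGS_mul_lagGS_of_lt hα h
end

section
/- In an m-dimensional oriented real inner product space W, for vectors v_0, ..., v_{m-2}, the vector u' = ⋆(v_0 ∧ ⋯ ∧ v_{m-2}) satisfies ⟨u', u'⟩ = det(⟨v_i, v_j⟩)_{0 ≤ i,j ≤ m-2}, i.e., its squared norm equals the Gram determinant of v_0, ..., v_{m-2}. -/
open Module Matrix
open scoped InnerProductSpace

/-!
Since `⟪u', v i⟫` is the volume form evaluated on a family with a repeated vector, `u'` is
orthogonal to every `v i`, so the Gram matrix of `v₀, …, v_{k-1}, w` is block diagonal for any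
`w ⊥ v`, and its determinant is `‖w‖² · det (gram v)`. On the other hand, the Gram determinant of
`k + 1` vectors in a `(k + 1)`-dimensional space is the square of their volume, here `⟪u', w⟫²`.
Taking `w = u'` gives `‖u'‖² · det (gram v) = ‖u'‖⁴`; if `u' = 0`, any nonzero `w ⊥ v` shows that
`det (gram v) = 0`.
-/

section Gram

variable {𝕜 E : Type*} [RCLike 𝕜] [NormedAddCommGroup E] [InnerProductSpace 𝕜 E]

theorem Matrix.det_gram_snoc_of_forall_inner_eq_zero {k : ℕ} (v : Fin k → E) (w : E)
    (h : ∀ i, ⟪w, v i⟫_𝕜 = 0) :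
    (gram 𝕜 (Fin.snoc v w : Fin (k + 1) → E)).det = ⟪w, w⟫_𝕜 * (gram 𝕜 v).det := by
  rw [det_succ_row _ (Fin.last k), Finset.sum_eq_single (Fin.last k)]
  · simp [Fin.succAbove_last, submatrix, gram]
  · intro j _ hj
    obtain ⟨i, rfl⟩ := Fin.exists_castSucc_eq.mpr hj
    simp [h]
  · simp

theorem exists_ne_zero_forall_inner_eq_zero [FiniteDimensional 𝕜 E] {ι : Type*} [Fintype ι]
    (v : ι → E) (h : Fintype.card ι < finrank 𝕜 E) : ∃ w ≠ 0, ∀ i, ⟪w, v i⟫_𝕜 = 0 := by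
  have hspan : Submodule.span 𝕜 (Set.range v) ≠ ⊤ := fun htop =>
    (finrank_range_le_card (R := 𝕜) v).not_gt (by rwa [Set.finrank, htop, finrank_top])
  obtain ⟨w, hw, hw0⟩ :=
    (Submodule.ne_bot_iff _).mp (mt Submodule.orthogonal_eq_bot_iff.mp hspan)
  exact ⟨w, hw0, fun i =>
    Submodule.inner_left_of_mem_orthogonal (Submodule.subset_span (Set.mem_range_self i)) hw⟩

end Gram

theorem Orientation.det_gram_eq_volumeForm_sq {E : Type*} [NormedAddCommGroup E]
    [InnerProductSpace ℝ E] [FiniteDimensional ℝ E] {n : ℕ} [Fact (finrank ℝ E = n)]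
    (o : Orientation ℝ E (Fin n)) (f : Fin n → E) :
    (gram ℝ f).det = o.volumeForm f ^ 2 := by
  let b : OrthonormalBasis (Fin n) ℝ E :=
    (stdOrthonormalBasis ℝ E).reindex (finCongr Fact.out)
  rw [← sq_abs, o.volumeForm_robust' b, sq_abs, gram_eq_conjTranspose_mul b, det_mul,
    det_conjTranspose, b.toBasis.det_apply, sq]
  rfl

theorem hodge_star_norm_sq_eq_gram_det
    {W : Type*} [NormedAddCommGroup W] [InnerProductSpace ℝ W] [FiniteDimensional ℝ W]
    (k : ℕ) [Fact (finrank ℝ W = k + 1)] (o : Orientation ℝ W (Fin (k + 1)))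
    (v : Fin k → W)
    (u' : W)
    -- `u' = ⋆(v₀ ∧ ⋯ ∧ v_{k-1})`, characterized by `⟨u', w⟩ Ω = v₀ ∧ ⋯ ∧ v_{k-1} ∧ w`:
    (hu' : ∀ w : W, (inner ℝ u' w : ℝ) = o.volumeForm (Fin.snoc v w)) :
    (inner ℝ u' u' : ℝ)
      = Matrix.det (Matrix.of fun i j : Fin k => (inner ℝ (v i) (v j) : ℝ)) := by
  change _ = (gram ℝ v).det
  have key (w : W) (hw : ∀ i, ⟪w, v i⟫_ℝ = 0) :
      ⟪w, w⟫_ℝ * (gram ℝ v).det = ⟪u', w⟫_ℝ ^ 2 := by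
    rw [← det_gram_snoc_of_forall_inner_eq_zero v w hw, o.det_gram_eq_volumeForm_sq, hu']
  have horth (i : Fin k) : ⟪u', v i⟫_ℝ = 0 := by
    rw [hu']
    exact o.volumeForm.map_eq_zero_of_eq _ (by simp) (Fin.castSucc_lt_last i).ne
  rcases eq_or_ne u' 0 with rfl | hu'0
  · obtain ⟨w, hw0, hw⟩ :=
      exists_ne_zero_forall_inner_eq_zero (𝕜 := ℝ) v (by simp [(Fact.out : finrank ℝ W = k + 1)])
    simpa [hw0, eq_comm] using key w hw
  · have := key u' horth
    rw [sq] at this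
    exact (mul_left_cancel₀ (inner_self_ne_zero.mpr hu'0) this).symm
end
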